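/- Let n ≥ 3 and suppose the dihedral group D_{2n} has the m-DCI property for some m with 1 ≤ m ≤ n−1. Then n is odd. -/

import Mathlib

/-- The Cayley digraph relation of `G` with connection set `S`:
there is an arc from `x` to `y` iff `y = s * x` for some `s ∈ S`. -/
def cayRel {G : Type*} [Group G] (S : Set G) : G → G → Prop :=
  fun x y => y * x⁻¹ ∈ S

/-- The automorphism group of the Cayley digraph `Cay(G,S)`,
as a subgroup of the permutations of the vertex set `G`. -/
def cayAut {G : Type*} [Group G] (S : Set G) : Subgroup (Equiv.Perm G) where
  carrier := {f | ∀ x y, cayRel S (f x) (f y) ↔ cayRel S x y}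
  one_mem' := by intro x y; rfl
  mul_mem' := by
    intro f g hf hg x y
    rw [Equiv.Perm.mul_apply, Equiv.Perm.mul_apply, hf, hg]
  inv_mem' := by
    intro f hf x y
    simpa [Equiv.Perm.coe_inv, Equiv.apply_symm_apply] using (hf (f⁻¹ x) (f⁻¹ y)).symm

/-- `Cay(G,S)` is a CI-digraph: any isomorphic Cayley digraph `Cay(G,T)`
is Cayley isomorphic to it. -/
def IsCIDigraph {G : Type*} [Group G] (S : Set G) : Prop :=
  ∀ T : Set G, (1 : G) ∉ T → Nonempty (cayRel S ≃r cayRel T) →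
    ∃ α : G ≃* G, α '' S = T

/-- `G` has the `m`-DCI property: every Cayley digraph of `G` of out-valency `m`
is a CI-digraph. -/
def HasDCI (G : Type*) [Group G] (m : ℕ) : Prop :=
  ∀ S : Set G, (1 : G) ∉ S → S.ncard = m → IsCIDigraph S

/-- The right regular representation `R(G)` as a subgroup of `Perm G`. -/
def rightReg (G : Type*) [Group G] : Subgroup (Equiv.Perm G) where
  carrier := Set.range fun g : G => Equiv.mulRight g
  one_mem' := ⟨1, by ext x; simp⟩
  mul_mem' := by
    rintro _ _ ⟨g, rfl⟩ ⟨h, rfl⟩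
    exact ⟨h * g, by ext x; simp [mul_assoc]⟩
  inv_mem' := by
    rintro _ ⟨g, rfl⟩
    exact ⟨g⁻¹, by ext x; simp [Equiv.Perm.inv_def]⟩

/-- A subgroup of permutations of `V` is regular if for all `x y : V` there is a
unique element sending `x` to `y`. -/
def IsRegularSubgroup {V : Type*} (H : Subgroup (Equiv.Perm V)) : Prop :=
  ∀ x y : V, ∃! h : H, (h : Equiv.Perm V) x = y

/-!
Let `n = 2k` be even. The rotations `H` and the elements `E = {r i, sr i | i even}` are subgroups
of index 2 of `D_{2n}`, and the reflection `w = sr 1` lies outside both and inverts `H` by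
conjugation. Multiplying on the left by `w` exactly the elements that lie in one of `H`, `E` but
not the other gives an involution `φ` of `D_{2n}` with `φ(H) = E`, and for every inverse-closed
`S ⊆ H` it is an isomorphism `Cay(S) ≅ Cay(φ(S))`. For `n ≥ 3` every automorphism of `D_{2n}`
preserves `H`, so if `r 1 ∈ S` then the reflection `φ(r 1) ∈ φ(S)` shows that `Cay(S)` is not a
CI-digraph. Such an `S` of size `m` exists for `2 ≤ m ≤ n - 1`; for `m = 1` the perfect matchings
`Cay({r k})` and `Cay({sr 0})` play the same role.
-/

section Twist

variable {G : Type*} [Group G]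

structure IsTwistingInvolution (H E : Subgroup G) (w : G) : Prop where
  index_left : H.index = 2
  index_right : E.index = 2
  notMem_left : w ∉ H
  notMem_right : w ∉ E
  mul_self : w * w = 1
  mul_mul_self_eq_inv : ∀ h ∈ H, w * h * w = h⁻¹

open Classical in
noncomputable def twist (H E : Subgroup G) (w x : G) : G :=
  if (x ∈ H ↔ x ∈ E) then x else w * x

variable {H E : Subgroup G} {w : G}

lemma twist_of_iff {x : G} (hx : x ∈ H ↔ x ∈ E) : twist H E w x = x := if_pos hx

lemma twist_of_not_iff {x : G} (hx : ¬(x ∈ H ↔ x ∈ E)) : twist H E w x = w * x := if_neg hx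

namespace IsTwistingInvolution

variable (hw : IsTwistingInvolution H E w)
include hw

lemma mul_mem_left_iff (x : G) : w * x ∈ H ↔ x ∉ H := by
  rw [Subgroup.mul_mem_iff_of_index_two hw.index_left]; simp [hw.notMem_left]

lemma mul_mem_right_iff (x : G) : w * x ∈ E ↔ x ∉ E := by
  rw [Subgroup.mul_mem_iff_of_index_two hw.index_right]; simp [hw.notMem_right]

lemma twist_mem_left_iff (x : G) : twist H E w x ∈ H ↔ x ∈ E := by
  by_cases hx : x ∈ H ↔ x ∈ E
  · rw [twist_of_iff hx, hx]
  · rw [twist_of_not_iff hx, hw.mul_mem_left_iff]; tauto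

lemma twist_mem_right_iff (x : G) : twist H E w x ∈ E ↔ x ∈ H := by
  by_cases hx : x ∈ H ↔ x ∈ E
  · rw [twist_of_iff hx, hx]
  · rw [twist_of_not_iff hx, hw.mul_mem_right_iff]; tauto

lemma twist_involutive : Function.Involutive (twist H E w) := by
  intro x
  by_cases hx : x ∈ H ↔ x ∈ E
  · rw [twist_of_iff hx, twist_of_iff hx]
  · have hwx : ¬(w * x ∈ H ↔ w * x ∈ E) := by
      rw [hw.mul_mem_left_iff, hw.mul_mem_right_iff]; tauto
    rw [twist_of_not_iff hx, twist_of_not_iff hwx, ← mul_assoc, hw.mul_self, one_mul]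

/-- The inverse appears because conjugation by `w` inverts `H`. -/
lemma twist_mul_mul_inv_twist {g : G} (hg : g ∈ H) (x : G) :
    twist H E w (g * x) * (twist H E w x)⁻¹ = twist H E w g ∨
      twist H E w (g * x) * (twist H E w x)⁻¹ = twist H E w g⁻¹ := by
  have hgx_left : g * x ∈ H ↔ x ∈ H := by
    rw [Subgroup.mul_mem_iff_of_index_two hw.index_left]; tauto
  have hgx_right := Subgroup.mul_mem_iff_of_index_two hw.index_right (a := g) (b := x)
  have hw' : w⁻¹ = w := inv_eq_of_mul_eq_one_right hw.mul_self
  by_cases hx : x ∈ H ↔ x ∈ E <;> by_cases hgE : g ∈ E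
  · left
    rw [twist_of_iff hx, twist_of_iff (by tauto), twist_of_iff (by tauto), mul_inv_cancel_right]
  · left
    rw [twist_of_iff hx, twist_of_not_iff (by tauto), twist_of_not_iff (by tauto),
      mul_assoc, mul_inv_cancel_right]
  · right
    rw [twist_of_not_iff hx, twist_of_not_iff (by tauto),
      twist_of_iff (by rw [inv_mem_iff, inv_mem_iff]; tauto), mul_inv_rev, hw',
      ← hw.mul_mul_self_eq_inv g hg]
    group
  · right
    rw [twist_of_not_iff hx, twist_of_iff (by tauto),
      twist_of_not_iff (by rw [inv_mem_iff, inv_mem_iff]; tauto), mul_inv_rev, hw',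
      ← hw.mul_mul_self_eq_inv g hg]
    simp only [← mul_assoc, hw.mul_self, one_mul, mul_inv_cancel_right]

lemma twist_mul_inv_mem_image_iff {S : Set G} (hSH : S ⊆ H) (hS : ∀ s ∈ S, s⁻¹ ∈ S)
    (x y : G) : twist H E w y * (twist H E w x)⁻¹ ∈ twist H E w '' S ↔ y * x⁻¹ ∈ S := by
  have hinj := hw.twist_involutive.injective
  by_cases hyx : y * x⁻¹ ∈ H
  · have hy : y = y * x⁻¹ * x := by group
    rw [hy, mul_inv_cancel_right]
    rcases hw.twist_mul_mul_inv_twist hyx x with h | h <;> rw [h, hinj.mem_set_image]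
    exact ⟨fun h => by simpa using hS _ h, hS _⟩
  · refine iff_of_false ?_ fun h => hyx (hSH h)
    rintro ⟨s, hs, hs_eq⟩
    have hE : twist H E w s ∈ E := (hw.twist_mem_right_iff s).mpr (hSH hs)
    rw [hs_eq, Subgroup.mul_mem_iff_of_index_two hw.index_right, inv_mem_iff,
      hw.twist_mem_right_iff, hw.twist_mem_right_iff] at hE
    exact hyx ((Subgroup.mul_mem_iff_of_index_two hw.index_left).mpr (by rwa [inv_mem_iff]))

lemma nonempty_relIso_cayRel_twist_image {S : Set G} (hSH : S ⊆ H)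
    (hS : ∀ s ∈ S, s⁻¹ ∈ S) : Nonempty (cayRel S ≃r cayRel (twist H E w '' S)) :=
  ⟨⟨hw.twist_involutive.toPerm, fun {x y} => hw.twist_mul_inv_mem_image_iff hSH hS x y⟩⟩

end IsTwistingInvolution

end Twist

lemma Equiv.Perm.cycleType_eq_replicate_of_sq_eq_one {α : Type*} [Fintype α] [DecidableEq α]
    {σ : Equiv.Perm α} (hσ : σ ^ 2 = 1) (hfix : ∀ x, σ x ≠ x) :
    σ.cycleType = Multiset.replicate (Fintype.card α / 2) 2 := by
  have hrep := Equiv.Perm.cycleType_of_pow_prime_eq_one hσ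
  have hsum := σ.sum_cycleType
  have hsupp : σ.support = Finset.univ := by
    ext x
    simp [hfix x]
  rw [hrep, Multiset.sum_replicate, hsupp, Finset.card_univ, smul_eq_mul] at hsum
  rw [hrep]
  congr 1
  omega

/-- Both digraphs are perfect matchings on `G`, and the two matchings are conjugate in `Perm G`
because their cycle types agree. -/
lemma nonempty_relIso_cayRel_singleton {G : Type*} [Group G] [Finite G] {z w : G}
    (hz : z * z = 1) (hw : w * w = 1) (hz1 : z ≠ 1) (hw1 : w ≠ 1) :
    Nonempty (cayRel ({z} : Set G) ≃r cayRel ({w} : Set G)) := by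
  classical
  have : Fintype G := Fintype.ofFinite G
  have cycleType_mulLeft {a : G} (ha : a * a = 1) (ha1 : a ≠ 1) :
      (Equiv.mulLeft a).cycleType = Multiset.replicate (Fintype.card G / 2) 2 :=
    Equiv.Perm.cycleType_eq_replicate_of_sq_eq_one
      (by ext x; simp [sq, ← mul_assoc, ha]) (fun x hx => ha1 (by simpa using hx))
  obtain ⟨c, hc⟩ := isConj_iff.mp <| Equiv.Perm.isConj_iff_cycleType_eq.mpr <|
    (cycleType_mulLeft hz hz1).trans (cycleType_mulLeft hw hw1).symm
  have hc_apply (x : G) : c (z * x) = w * c x := by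
    simpa using congr($hc (c x))
  refine ⟨⟨c, fun {x y} => ?_⟩⟩
  change c y * (c x)⁻¹ = w ↔ y * x⁻¹ = z
  rw [mul_inv_eq_iff_eq_mul, mul_inv_eq_iff_eq_mul, ← hc_apply, c.injective.eq_iff]

lemma ZMod.intCast_injOn_Ioc {k : ℕ} : Set.InjOn (Int.cast : ℤ → ZMod (2 * k))
    (Set.Ioc (-k) k) := by
  intro a ha b hb hab
  rw [ZMod.intCast_eq_intCast_iff_dvd_sub] at hab
  have := Int.eq_zero_of_abs_lt_dvd hab (by
    simp only [Set.mem_Ioc] at ha hb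
    rw [abs_lt]; push_cast; omega)
  omega

/-- Witness: `{±1, …, ±t}`, together with `k = -k` when `m = 2t + 1` is odd. -/
lemma ZMod.exists_finset_neg_mem {k m : ℕ} (hm : 2 ≤ m) (hmk : m < 2 * k) :
    ∃ A : Finset (ZMod (2 * k)), 0 ∉ A ∧ 1 ∈ A ∧ (∀ a ∈ A, -a ∈ A) ∧ A.card = m := by
  obtain ⟨B, hB, h1B, hBm⟩ : ∃ B : Finset ℤ,
      (∀ b ∈ B, b ∈ Set.Ioc (-(k : ℤ)) k ∧ b ≠ 0 ∧ (-b ∈ B ∨ b = k)) ∧ 1 ∈ B ∧ B.card = m := by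
    have hW (t : ℕ) : ((Finset.Icc (-t : ℤ) t).erase 0).card = 2 * t := by
      rw [Finset.card_erase_of_mem (by simp), Int.card_Icc]; omega
    rcases Nat.even_or_odd' m with ⟨t, rfl | rfl⟩
    · refine ⟨(Finset.Icc (-t : ℤ) t).erase 0, ?_, ?_, hW t⟩ <;>
        simp only [Finset.mem_erase, Finset.mem_Icc, Set.mem_Ioc] <;> omega
    · refine ⟨insert (k : ℤ) ((Finset.Icc (-t : ℤ) t).erase 0), ?_, ?_, ?_⟩
      · simp only [Finset.mem_insert, Finset.mem_erase, Finset.mem_Icc, Set.mem_Ioc]; omega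
      · simp only [Finset.mem_insert, Finset.mem_erase, Finset.mem_Icc]; omega
      · rw [Finset.card_insert_of_notMem (by simp only [Finset.mem_erase, Finset.mem_Icc]; omega),
          hW]
  have hinj : Set.InjOn (Int.cast : ℤ → ZMod (2 * k)) B :=
    ZMod.intCast_injOn_Ioc.mono fun b hb => (hB b hb).1
  have hk_neg : -((k : ℤ) : ZMod (2 * k)) = (k : ℤ) := by
    rw [neg_eq_iff_add_eq_zero, ← Int.cast_add, ← two_mul]
    exact_mod_cast ZMod.natCast_self (2 * k)
  refine ⟨B.image Int.cast, ?_,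
    by simpa using Finset.mem_image_of_mem (Int.cast : ℤ → ZMod (2 * k)) h1B, ?_,
    Finset.card_image_of_injOn hinj |>.trans hBm⟩
  · rw [Finset.mem_image]
    rintro ⟨b, hb, hb0⟩
    exact (hB b hb).2.1 (ZMod.intCast_injOn_Ioc (hB b hb).1 (by simp; omega) (by simpa using hb0))
  · simp only [Finset.mem_image]
    rintro _ ⟨b, hb, rfl⟩
    rcases (hB b hb).2.2 with hb' | rfl
    · exact ⟨-b, hb', Int.cast_neg b⟩
    · exact ⟨_, hb, hk_neg.symm⟩

namespace DihedralGroup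

variable {n : ℕ}

def rotations (n : ℕ) : Subgroup (DihedralGroup n) where
  carrier := Set.range r
  one_mem' := ⟨0, rfl⟩
  mul_mem' := by
    rintro _ _ ⟨i, rfl⟩ ⟨j, rfl⟩
    exact ⟨i + j, rfl⟩
  inv_mem' := by
    rintro _ ⟨i, rfl⟩
    exact ⟨-i, rfl⟩

lemma r_mem_rotations (i : ZMod n) : r i ∈ rotations n := ⟨i, rfl⟩

lemma sr_notMem_rotations (i : ZMod n) : sr i ∉ rotations n := by
  rintro ⟨j, hj⟩
  cases hj

lemma index_rotations : (rotations n).index = 2 := by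
  refine Subgroup.index_eq_two_iff.mpr ⟨sr 0, ?_⟩
  rintro (i | i) <;> simp [r_mem_rotations, sr_notMem_rotations]

lemma mulEquiv_apply_mem_rotations (hn : 3 ≤ n) (α : DihedralGroup n ≃* DihedralGroup n)
    {g : DihedralGroup n} (hg : g ∈ rotations n) : α g ∈ rotations n := by
  have hα : α (r 1) ∈ rotations n := by
    rcases hr : α (r 1) with i | i
    · exact r_mem_rotations i
    · have := α.orderOf_eq (r 1)
      rw [hr, orderOf_sr, orderOf_r_one] at this
      omega
  obtain ⟨i, rfl⟩ := hg
  have : NeZero n := ⟨by omega⟩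
  rw [← ZMod.natCast_zmod_val i, ← r_one_pow, map_pow]
  exact pow_mem hα _

def parity (hn : 2 ∣ n) : DihedralGroup n → ZMod 2
  | r i => ZMod.castHom hn (ZMod 2) i
  | sr i => ZMod.castHom hn (ZMod 2) i

def evens (hn : 2 ∣ n) : Subgroup (DihedralGroup n) where
  carrier := {g | parity hn g = 0}
  one_mem' := show parity hn (r 0) = 0 by simp [parity]
  mul_mem' := by
    rintro (i | i) (j | j) hi hj <;> simp_all [parity]
  inv_mem' := by
    rintro (i | i) hi <;> simp_all [parity]

@[simp] lemma r_mem_evens_iff (hn : 2 ∣ n) (i : ZMod n) :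
    r i ∈ evens hn ↔ ZMod.castHom hn (ZMod 2) i = 0 := Iff.rfl

@[simp] lemma sr_mem_evens_iff (hn : 2 ∣ n) (i : ZMod n) :
    sr i ∈ evens hn ↔ ZMod.castHom hn (ZMod 2) i = 0 := Iff.rfl

lemma index_evens (hn : 2 ∣ n) : (evens hn).index = 2 := by
  have key (a : ZMod 2) : Xor (a + 1 = 0) (a = 0) := by revert a; decide
  refine Subgroup.index_eq_two_iff.mpr ⟨r 1, ?_⟩
  rintro (i | i) <;>
    simpa only [r_mul_r, sr_mul_r, r_mem_evens_iff, sr_mem_evens_iff, map_add, map_one]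
      using key _

lemma isTwistingInvolution_sr_one (hn : 2 ∣ n) :
    IsTwistingInvolution (rotations n) (evens hn) (sr 1) where
  index_left := index_rotations
  index_right := index_evens hn
  notMem_left := sr_notMem_rotations 1
  notMem_right := by rw [sr_mem_evens_iff, map_one]; exact one_ne_zero
  mul_self := sr_mul_self 1
  mul_mul_self_eq_inv := by
    rintro _ ⟨i, rfl⟩
    simp only [sr_mul_r, sr_mul_sr, inv_r]
    ring_nf

lemma not_isCIDigraph_of_subset_rotations (hn : 3 ≤ n) {S T : Set (DihedralGroup n)}
    (hS : S ⊆ rotations n) (hT : ¬T ⊆ rotations n) (hT1 : 1 ∉ T)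
    (hST : Nonempty (cayRel S ≃r cayRel T)) : ¬IsCIDigraph S := by
  intro hCI
  obtain ⟨α, rfl⟩ := hCI T hT1 hST
  exact hT (Set.image_subset_iff.mpr fun g hg => mulEquiv_apply_mem_rotations hn α (hS hg))

lemma not_hasDCI_one (hn : 3 ≤ n) (heven : 2 ∣ n) : ¬HasDCI (DihedralGroup n) 1 := by
  obtain ⟨k, rfl⟩ := heven
  have hk : ((k : ℕ) : ZMod (2 * k)) ≠ 0 := by
    rw [Ne, ZMod.natCast_eq_zero_iff]
    exact fun h => by have := Nat.le_of_dvd (by omega) h; omega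
  have hkk : r ((k : ℕ) : ZMod (2 * k)) * r (k : ℕ) = 1 := by
    rw [r_mul_r, ← Nat.cast_add, ← two_mul, ZMod.natCast_self, r_zero]
  have hk1 : r ((k : ℕ) : ZMod (2 * k)) ≠ 1 := fun h1 => hk (r.inj (h1.trans one_def))
  have hs1 : (sr 0 : DihedralGroup (2 * k)) ≠ 1 := fun h1 => by cases h1
  have : NeZero (2 * k) := ⟨by omega⟩
  intro h
  exact not_isCIDigraph_of_subset_rotations hn (T := {sr 0})
    (Set.singleton_subset_iff.mpr (r_mem_rotations _))
    (fun hT => sr_notMem_rotations 0 (hT rfl)) hs1.symm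
    (nonempty_relIso_cayRel_singleton hkk (sr_mul_self 0) hk1 hs1)
    (h _ hk1.symm (Set.ncard_singleton _))

lemma not_hasDCI_of_two_le {m : ℕ} (hn : 3 ≤ n) (heven : 2 ∣ n) (hm : 2 ≤ m) (hmn : m < n) :
    ¬HasDCI (DihedralGroup n) m := by
  have hw := isTwistingInvolution_sr_one heven
  obtain ⟨k, rfl⟩ := heven
  obtain ⟨A, hA0, hA1, hAneg, hAm⟩ := ZMod.exists_finset_neg_mem hm hmn
  have hr : Function.Injective (r : ZMod (2 * k) → DihedralGroup (2 * k)) := fun _ _ => r.inj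
  set S : Set (DihedralGroup (2 * k)) := r '' A
  have hS1 : (1 : DihedralGroup (2 * k)) ∉ S := by
    rw [one_def, hr.mem_set_image]; exact hA0
  have hSrot : S ⊆ rotations (2 * k) := Set.image_subset_iff.mpr fun a _ => r_mem_rotations a
  have hSinv : ∀ s ∈ S, s⁻¹ ∈ S := by
    rintro _ ⟨a, ha, rfl⟩
    exact ⟨-a, hAneg a ha, rfl⟩
  set φ := twist (rotations (2 * k)) (evens ⟨k, rfl⟩) (sr 1)
  have hφ1 : φ 1 = 1 := twist_of_iff (iff_of_true (one_mem _) (one_mem _))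
  intro h
  refine not_isCIDigraph_of_subset_rotations hn hSrot (T := φ '' S) ?_ ?_
    (hw.nonempty_relIso_cayRel_twist_image hSrot hSinv)
    (h S hS1 (by rw [Set.ncard_image_of_injective _ hr, Set.ncard_coe_finset, hAm]))
  · intro hT
    have := (hw.twist_mem_left_iff (r 1)).mp (hT ⟨r 1, ⟨1, hA1, rfl⟩, rfl⟩)
    rw [r_mem_evens_iff, map_one] at this
    exact one_ne_zero this
  · rw [← hφ1, hw.twist_involutive.injective.mem_set_image]
    exact hS1

end DihedralGroup

/-- If `D_{2n}` (`n ≥ 3`) has the `m`-DCI property for some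
`1 ≤ m ≤ n - 1`, then `n` is odd. -/
theorem stmt9 (n m : ℕ) (hn : 3 ≤ n) (hm1 : 1 ≤ m) (hm2 : m ≤ n - 1)
    (h : HasDCI (DihedralGroup n) m) : Odd n := by
  by_contra hodd
  have heven : 2 ∣ n := even_iff_two_dvd.mp (Nat.not_odd_iff_even.mp hodd)
  rcases hm1.eq_or_lt with rfl | hm
  · exact DihedralGroup.not_hasDCI_one hn heven h
  · exact DihedralGroup.not_hasDCI_of_two_le hn heven hm (by omega) h
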